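/- Suppose the matrix R_1 (with quadratic form nonnegative) and R_2 = [[D_{c1}+D_{c2}, 0, D_{c1}],[0,0,0],[D_{c1},0,D_{c1}]] are as in the robust integral action closed loop. Then along solutions of ẇ = (𝒥 - R_1 - R_2)∇𝒲, one has d𝒲/dt ≤ -‖∇_{w_a}𝒲‖²_{D_{c2}} - ‖∇_{w_a}𝒲 + ∇_{w_c}𝒲‖²_{D_{c1}}. -/

import Mathlib

/-!
Along the flow, `d𝒲/dt = ∇𝒲ᵀ (𝒥 - R₁ - R₂) ∇𝒲`. The skew-symmetric part contributes nothing,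
`R₁` only dissipates, and expanding the block matrix `R₂` on `∇𝒲 = (a, b, c)` gives exactly
`aᵀ D_{c2} a + (a + c)ᵀ D_{c1} (a + c)`, since the off-diagonal `D_{c1}` blocks complete the square.
-/

open Matrix

/-- View a plain vector as an element of Euclidean space. -/
noncomputable def toE {ι : Type*} [Fintype ι] (v : ι → ℝ) : EuclideanSpace ℝ ι :=
  (WithLp.equiv 2 _).symm v

/-- View an element of Euclidean space as a plain vector. -/
def toV {ι : Type*} [Fintype ι] (v : EuclideanSpace ℝ ι) : ι → ℝ :=
  WithLp.equiv 2 _ v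

theorem Matrix.dotProduct_mulVec_self_eq_zero_of_transpose_eq_neg {ι R : Type*} [Fintype ι]
    [CommRing R] [NoZeroDivisors R] [CharZero R] {A : Matrix ι ι R} (hA : Aᵀ = -A) (v : ι → R) :
    v ⬝ᵥ A *ᵥ v = 0 := by
  have h : v ⬝ᵥ A *ᵥ v = -(v ⬝ᵥ A *ᵥ v) := by
    conv_lhs => rw [← neg_neg A, ← hA, neg_mulVec, dotProduct_neg, mulVec_transpose,
      dotProduct_comm, ← dotProduct_mulVec]
  exact self_eq_neg.mp h

theorem dotProduct_sub_sub_mulVec_self_le_neg {ι : Type*} [Fintype ι] {J R₁ : Matrix ι ι ℝ}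
    (hJ : Jᵀ = -J) (R₂ : Matrix ι ι ℝ) (v : ι → ℝ) (hR₁ : 0 ≤ v ⬝ᵥ R₁ *ᵥ v) :
    v ⬝ᵥ (J - R₁ - R₂) *ᵥ v ≤ -(v ⬝ᵥ R₂ *ᵥ v) := by
  rw [sub_mulVec, sub_mulVec, dotProduct_sub, dotProduct_sub,
    dotProduct_mulVec_self_eq_zero_of_transpose_eq_neg hJ]
  linarith

theorem dotProduct_fromBlocks_integralAction_mulVec {ι κ R : Type*} [Fintype ι] [Fintype κ]
    [CommRing R] (D₁ D₂ : Matrix ι ι R) (v : ι ⊕ (κ ⊕ ι) → R) :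
    v ⬝ᵥ fromBlocks (D₁ + D₂) (fromCols (0 : Matrix ι κ R) D₁) (fromRows (0 : Matrix κ ι R) D₁)
        (fromBlocks (0 : Matrix κ κ R) 0 0 D₁) *ᵥ v =
      (fun i => v (Sum.inl i)) ⬝ᵥ D₂ *ᵥ (fun i => v (Sum.inl i)) +
        ((fun i => v (Sum.inl i)) + fun i => v (Sum.inr (Sum.inr i))) ⬝ᵥ
          D₁ *ᵥ ((fun i => v (Sum.inl i)) + fun i => v (Sum.inr (Sum.inr i))) := by
  obtain ⟨a, b, c, rfl⟩ : ∃ a b c, v = Sum.elim a (Sum.elim b c) :=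
    ⟨_, _, _, by funext i; rcases i with i | i | i <;> rfl⟩
  simp only [fromBlocks_mulVec, fromCols_mulVec_sumElim, fromRows_mulVec,
    sumElim_dotProduct_sumElim, add_mulVec, mulVec_add, dotProduct_add, add_dotProduct,
    Sum.elim_comp_inl, Sum.elim_comp_inr, zero_mulVec, dotProduct_zero, zero_add,
    Sum.elim_inl, Sum.elim_inr]
  ring

theorem hasDerivAt_comp_of_hasDerivAt_toE {ι : Type*} [Fintype ι] {W : EuclideanSpace ℝ ι → ℝ}
    {w : ℝ → EuclideanSpace ℝ ι} {t : ℝ} {v : ι → ℝ} (hW : DifferentiableAt ℝ W (w t))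
    (hw : HasDerivAt w (toE v) t) :
    HasDerivAt (fun τ => W (w τ)) (toV (gradient W (w t)) ⬝ᵥ v) t := by
  refine (hW.hasGradientAt.hasFDerivAt.comp_hasDerivAt t hw).congr_deriv ?_
  rw [InnerProductSpace.toDual_apply_apply]
  simp only [toE, toV, PiLp.inner_apply, dotProduct, WithLp.equiv_apply, WithLp.equiv_symm_apply,
    RCLike.inner_apply, conj_trivial, mul_comm]

theorem stmt_14 {m s : ℕ}
    (J R1 : EuclideanSpace ℝ (Fin m ⊕ (Fin s ⊕ Fin m)) →
      Matrix (Fin m ⊕ (Fin s ⊕ Fin m)) (Fin m ⊕ (Fin s ⊕ Fin m)) ℝ)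
    (hJ : ∀ w, (J w)ᵀ = -(J w))
    (hR1 : ∀ w, ∀ v : Fin m ⊕ (Fin s ⊕ Fin m) → ℝ, 0 ≤ v ⬝ᵥ (R1 w).mulVec v)
    (Dc1 Dc2 : Matrix (Fin m) (Fin m) ℝ)
    (R2 : Matrix (Fin m ⊕ (Fin s ⊕ Fin m)) (Fin m ⊕ (Fin s ⊕ Fin m)) ℝ)
    (hR2 : R2 = Matrix.fromBlocks (Dc1 + Dc2) (Matrix.fromCols (0 : Matrix (Fin m) (Fin s) ℝ) Dc1)
      (Matrix.fromRows (0 : Matrix (Fin s) (Fin m) ℝ) Dc1)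
      (Matrix.fromBlocks (0 : Matrix (Fin s) (Fin s) ℝ) 0 0 Dc1))
    (W : EuclideanSpace ℝ (Fin m ⊕ (Fin s ⊕ Fin m)) → ℝ) (hW : ContDiff ℝ 1 W)
    (w : ℝ → EuclideanSpace ℝ (Fin m ⊕ (Fin s ⊕ Fin m))) (t : ℝ)
    (hw : HasDerivAt w
      (toE ((J (w t) - R1 (w t) - R2).mulVec (toV (gradient W (w t))))) t) :
    deriv (fun τ => W (w τ)) t ≤
      -((fun i => toV (gradient W (w t)) (Sum.inl i)) ⬝ᵥ
          Dc2.mulVec (fun i => toV (gradient W (w t)) (Sum.inl i)))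
      - (((fun i => toV (gradient W (w t)) (Sum.inl i)) +
            (fun i => toV (gradient W (w t)) (Sum.inr (Sum.inr i)))) ⬝ᵥ
          Dc1.mulVec ((fun i => toV (gradient W (w t)) (Sum.inl i)) +
            (fun i => toV (gradient W (w t)) (Sum.inr (Sum.inr i))))) := by
  have hWt : DifferentiableAt ℝ W (w t) := (hW.differentiable one_ne_zero).differentiableAt
  rw [(hasDerivAt_comp_of_hasDerivAt_toE hWt hw).deriv, ← neg_add',
    ← dotProduct_fromBlocks_integralAction_mulVec, ← hR2]
  exact dotProduct_sub_sub_mulVec_self_le_neg (hJ (w t)) R2 _ (hR1 (w t) _)
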